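/- arXiv:2605.00469 — 2 statements merged into one kernel-verified Lean document; each statement's English description precedes it below -/
import Mathlib

section
/- Let A be an n×n and B an m×m symmetrizable GCM. Suppose there exist m linearly independent real roots β_1,…,β_m of A (β_i=w_i·α_{p_i}, β_i∨=w_i·α_{p_i}∨) with (⟨β_i∨,β_j⟩)_{i,j}=B, and n linearly independent real roots γ_1,…,γ_n of B with (⟨γ_i∨,γ_j⟩)_{i,j}=A (i.e., B⪯A and A⪯B in the Morita relation). Then m=n and det A = det B. -/
/-!
Writing the linearly independent π-systems as matrices, `B = Y A Xᵀ` and `A = Y' B X'ᵀ`, where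
the rows of `X` are the real roots and the rows of `Y` their coroots. Linear independence forces
`m = n`, so these matrices are square and `det A = (det Y det X)(det Y' det X') det A`. A symmetrizer
`d` of `A` makes each coroot `w αₚ∨` proportional to `D (w αₚ)`, where `D = diag d`, so `det Y` is
`det X` times a positive number and `det Y det X ≥ 0`. If `det A ≠ 0` the two integer factors
multiply to `1`, so `det Y det X = 1` and `det B = det A`; if `det A = 0` then `det B = 0` too.
-/

/-- An integer matrix is a generalized Cartan matrix. -/
def IsGCM {n : ℕ} (A : Matrix (Fin n) (Fin n) ℤ) : Prop :=
  (∀ i, A i i = 2) ∧ (∀ i j, i ≠ j → A i j ≤ 0) ∧ (∀ i j, A i j = 0 → A j i = 0)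

/-- `d` is a symmetrizer of `A`: positive rationals with `dᵢ aᵢⱼ = dⱼ aⱼᵢ`. -/
def IsSymmetrizer {n : ℕ} (A : Matrix (Fin n) (Fin n) ℤ) (d : Fin n → ℚ) : Prop :=
  (∀ i, 0 < d i) ∧ ∀ i j, d i * A i j = d j * A j i

/-- The pairing `⟨γ∨, β⟩` between the coroot lattice and the root lattice:
in coordinates (γ in the coroot basis, β in the root basis) it is `∑ γᵢ aᵢⱼ βⱼ`,
so that `⟨αᵢ∨, αⱼ⟩ = aᵢⱼ`. -/
def pairing {n : ℕ} (A : Matrix (Fin n) (Fin n) ℤ) (y x : Fin n → ℤ) : ℤ :=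
  ∑ i, ∑ j, y i * A i j * x j

/-- Simple reflection `s_k` acting on the root lattice: `s_k x = x − ⟨α_k∨, x⟩ α_k`. -/
def sRoot {n : ℕ} (A : Matrix (Fin n) (Fin n) ℤ) (k : Fin n) (x : Fin n → ℤ) : Fin n → ℤ :=
  fun i => x i - (if i = k then ∑ j, A k j * x j else 0)

/-- Simple reflection `s_k` acting on the coroot lattice: `s_k(αⱼ∨) = αⱼ∨ − aⱼₖ α_k∨`. -/
def sCoroot {n : ℕ} (A : Matrix (Fin n) (Fin n) ℤ) (k : Fin n) (y : Fin n → ℤ) : Fin n → ℤ :=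
  fun i => y i - (if i = k then ∑ j, y j * A j k else 0)

/-- Action on the root lattice of a Weyl group element given as a word in simple reflections. -/
def actRoot {n : ℕ} (A : Matrix (Fin n) (Fin n) ℤ) (w : List (Fin n)) (x : Fin n → ℤ) :
    Fin n → ℤ :=
  w.foldr (sRoot A) x

/-- Action on the coroot lattice of a Weyl group element given as a word in simple reflections. -/
def actCoroot {n : ℕ} (A : Matrix (Fin n) (Fin n) ℤ) (w : List (Fin n)) (y : Fin n → ℤ) :
    Fin n → ℤ :=
  w.foldr (sCoroot A) y

open Matrix

section Reflections

variable {n : ℕ} (A : Matrix (Fin n) (Fin n) ℤ) {d : Fin n → ℚ}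

lemma mul_sCoroot_eq_mul_sRoot (hd : ∀ i j, d i * A i j = d j * A j i) (k : Fin n)
    {x y : Fin n → ℤ} {c : ℚ} (h : ∀ i, c * y i = d i * x i) (i : Fin n) :
    c * sCoroot A k y i = d i * sRoot A k x i := by
  by_cases hik : i = k
  · subst hik
    have hsum : c * ∑ j, (y j : ℚ) * A j i = d i * ∑ j, (A i j : ℚ) * x j := by
      rw [Finset.mul_sum, Finset.mul_sum]
      exact Finset.sum_congr rfl fun j _ => by linear_combination (A j i : ℚ) * h j + x j * hd j i
    simp only [sCoroot, sRoot]
    push_cast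
    linear_combination h i - hsum
  · simpa only [sCoroot, sRoot, if_neg hik, sub_zero] using h i

lemma mul_actCoroot_eq_mul_actRoot (hd : ∀ i j, d i * A i j = d j * A j i) (w : List (Fin n))
    {x y : Fin n → ℤ} {c : ℚ} (h : ∀ i, c * y i = d i * x i) (i : Fin n) :
    c * actCoroot A w y i = d i * actRoot A w x i := by
  induction w generalizing i with
  | nil => exact h i
  | cons k w ih => exact mul_sCoroot_eq_mul_sRoot A hd k ih i

lemma mul_actCoroot_single_eq_mul_actRoot_single (hd : ∀ i j, d i * A i j = d j * A j i)
    (w : List (Fin n)) (p i : Fin n) :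
    d p * actCoroot A w (Pi.single p 1) i = d i * actRoot A w (Pi.single p 1) i :=
  mul_actCoroot_eq_mul_actRoot A hd w (fun l => by
    rcases eq_or_ne l p with rfl | hl <;> simp [*]) i

end Reflections

section RootMatrices

variable {n m : ℕ} (A : Matrix (Fin n) (Fin n) ℤ) (w : Fin m → List (Fin n)) (p : Fin m → Fin n)

def rootMatrix : Matrix (Fin m) (Fin n) ℤ :=
  Matrix.of fun i => actRoot A (w i) (Pi.single (p i) 1)

def corootMatrix : Matrix (Fin m) (Fin n) ℤ :=
  Matrix.of fun i => actCoroot A (w i) (Pi.single (p i) 1)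

lemma corootMatrix_mul_mul_rootMatrix_transpose_apply (i j : Fin m) :
    (corootMatrix A w p * A * (rootMatrix A w p)ᵀ) i j =
      pairing A (actCoroot A (w i) (Pi.single (p i) 1)) (actRoot A (w j) (Pi.single (p j) 1)) := by
  simp only [pairing, corootMatrix, rootMatrix, mul_apply, transpose_apply, of_apply,
    Finset.sum_mul]
  exact Finset.sum_comm

end RootMatrices

lemma det_mul_det_nonneg_of_diagonal_mul_eq_mul_diagonal {ι R : Type*} [Fintype ι]
    [DecidableEq ι] [CommRing R] [LinearOrder R] [IsStrictOrderedRing R] {X Y : Matrix ι ι R}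
    {d e : ι → R} (hd : ∀ i, 0 < d i) (he : ∀ i, 0 < e i)
    (h : diagonal e * Y = X * diagonal d) : 0 ≤ Y.det * X.det := by
  have hdet : (∏ i, e i) * Y.det = X.det * ∏ i, d i := by
    simpa only [det_mul, det_diagonal] using congrArg det h
  have hd_prod : 0 < ∏ i, d i := Finset.prod_pos fun i _ => hd i
  refine nonneg_of_mul_nonneg_right ?_ (Finset.prod_pos fun i _ => he i : 0 < ∏ i, e i)
  calc 0 ≤ X.det ^ 2 * ∏ i, d i := by positivity
    _ = (∏ i, e i) * (Y.det * X.det) := by linear_combination X.det * hdet.symm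

lemma det_corootMatrix_mul_det_rootMatrix_nonneg {n : ℕ} {A : Matrix (Fin n) (Fin n) ℤ}
    {d : Fin n → ℚ} (hd : IsSymmetrizer A d) (w : Fin n → List (Fin n)) (p : Fin n → Fin n) :
    0 ≤ (corootMatrix A w p).det * (rootMatrix A w p).det := by
  have hprop : diagonal (fun i => d (p i)) * (corootMatrix A w p).map (Int.cast : ℤ → ℚ) =
      (rootMatrix A w p).map (Int.cast : ℤ → ℚ) * diagonal d := by
    ext i k
    rw [diagonal_mul, mul_diagonal, mul_comm ((rootMatrix A w p).map _ i k)]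
    exact mul_actCoroot_single_eq_mul_actRoot_single A hd.2 (w i) (p i) k
  have := det_mul_det_nonneg_of_diagonal_mul_eq_mul_diagonal hd.1 (fun i => hd.1 (p i)) hprop
  rw [← Int.cast_det, ← Int.cast_det] at this
  exact_mod_cast this

lemma det_eq_det_of_eq_mul_mul_of_eq_mul_mul {ι : Type*} [Fintype ι] [DecidableEq ι]
    {A B X Y X' Y' : Matrix ι ι ℤ} (hB : B = Y * A * X) (hA : A = Y' * B * X')
    (hXY : 0 ≤ Y.det * X.det) : A.det = B.det := by
  have hdetB : B.det = Y.det * A.det * X.det := by rw [hB, det_mul, det_mul]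
  have hdetA : A.det = Y'.det * B.det * X'.det := by rw [hA, det_mul, det_mul]
  by_cases hA0 : A.det = 0
  · rw [hdetB, hA0, mul_zero, zero_mul]
  have hunit : (Y.det * X.det) * (Y'.det * X'.det) = 1 :=
    mul_left_cancel₀ hA0 (by linear_combination -hdetA - Y'.det * X'.det * hdetB)
  rw [hdetB, mul_right_comm, Int.eq_one_of_mul_eq_one_right hXY hunit, one_mul]

theorem morita_antisymm_size_det_general {n m : ℕ}
    (A : Matrix (Fin n) (Fin n) ℤ) (hAs : ∃ d, IsSymmetrizer A d)
    (B : Matrix (Fin m) (Fin m) ℤ)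
    (hBA : ∃ (w : Fin m → List (Fin n)) (p : Fin m → Fin n),
      LinearIndependent ℚ
        (fun i => fun k => ((actRoot A (w i) (Pi.single (p i) 1)) k : ℚ)) ∧
      ∀ i j, pairing A (actCoroot A (w i) (Pi.single (p i) 1))
          (actRoot A (w j) (Pi.single (p j) 1)) = B i j)
    (hAB : ∃ (w : Fin n → List (Fin m)) (p : Fin n → Fin m),
      LinearIndependent ℚ
        (fun i => fun k => ((actRoot B (w i) (Pi.single (p i) 1)) k : ℚ)) ∧
      ∀ i j, pairing B (actCoroot B (w i) (Pi.single (p i) 1))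
          (actRoot B (w j) (Pi.single (p j) 1)) = A i j) :
    m = n ∧ A.det = B.det := by
  obtain ⟨d, hd⟩ := hAs
  obtain ⟨w, p, hli, hpair⟩ := hBA
  obtain ⟨w', p', hli', hpair'⟩ := hAB
  obtain rfl : m = n := le_antisymm (by simpa using hli.fintype_card_le_finrank)
    (by simpa using hli'.fintype_card_le_finrank)
  refine ⟨rfl, det_eq_det_of_eq_mul_mul_of_eq_mul_mul (X := (rootMatrix A w p)ᵀ)
    (Y := corootMatrix A w p) (X' := (rootMatrix B w' p')ᵀ) (Y' := corootMatrix B w' p') ?_ ?_ ?_⟩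
  · ext i j
    rw [corootMatrix_mul_mul_rootMatrix_transpose_apply, hpair]
  · ext i j
    rw [corootMatrix_mul_mul_rootMatrix_transpose_apply, hpair']
  · simpa only [det_transpose] using det_corootMatrix_mul_det_rootMatrix_nonneg hd w p

/-- If `B ⪯ A` and `A ⪯ B` in the Morita relation (there are linearly
independent π-systems of type `B` in `A` and of type `A` in `B`), then the two
symmetrizable GCMs have the same size and equal determinants. -/
theorem morita_antisymm_size_det {n m : ℕ}
    (A : Matrix (Fin n) (Fin n) ℤ) (hA : IsGCM A) (hAs : ∃ d, IsSymmetrizer A d)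
    (B : Matrix (Fin m) (Fin m) ℤ) (hB : IsGCM B) (hBs : ∃ d, IsSymmetrizer B d)
    (hBA : ∃ (w : Fin m → List (Fin n)) (p : Fin m → Fin n),
      LinearIndependent ℚ
        (fun i => fun k => ((actRoot A (w i) (Pi.single (p i) 1)) k : ℚ)) ∧
      ∀ i j, pairing A (actCoroot A (w i) (Pi.single (p i) 1))
          (actRoot A (w j) (Pi.single (p j) 1)) = B i j)
    (hAB : ∃ (w : Fin n → List (Fin m)) (p : Fin n → Fin m),
      LinearIndependent ℚ
        (fun i => fun k => ((actRoot B (w i) (Pi.single (p i) 1)) k : ℚ)) ∧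
      ∀ i j, pairing B (actCoroot B (w i) (Pi.single (p i) 1))
          (actRoot B (w j) (Pi.single (p j) 1)) = A i j) :
    m = n ∧ A.det = B.det :=
  morita_antisymm_size_det_general A hAs B hBA hAB
end

section
/- Let A=(a_ij) be an n×n symmetrizable GCM with index set X={1,…,n}, let Y⊆X, and let d≥2 be an integer. Assume either (i) d divides a_ji for all i∈Y and all j∈X∖Y, or (ii) d divides a_ij for all i∈Y and all j∈X∖Y. Let W_Y be the subgroup of the Weyl group W generated by {s_k : k∈Y}. Then for every m and every family w_1,…,w_m∈W and p_1,…,p_m∈Y, there exist v_1,…,v_m∈W_Y such that ⟨w_i·α_{p_i}∨, w_j·α_{p_j}⟩ ≡ ⟨v_i·α_{p_i}∨, v_j·α_{p_j}⟩ (mod d) for all 1≤i,j≤m. Equivalently: every finite multiset Σ of real roots lying in W·Δre(Y), where Δre(Y)=W_Y·{α_p : p∈Y}, admits a multiset Σ̄ of elements of Δre(Y) whose matrix of coroot–root pairings is congruent to that of Σ modulo d. -/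
/-!
The pairing is `W`-invariant, so `⟨w α_p∨, w' α_q⟩ = ⟨α_p∨, w⁻¹ w' α_q⟩`. Work modulo `d`
under hypothesis (i): every root-lattice vector vanishing modulo `d` outside `Y` is fixed modulo
`d` by each `s_k` with `k ∉ Y`, and the reflections `s_k` with `k ∈ Y` keep it vanishing outside
`Y`. Hence erasing from the words all letters outside `Y` does not change the pairing modulo `d`.
Hypothesis (ii) is hypothesis (i) for the transposed matrix, which exchanges roots and coroots.
-/

open Matrix

section WeylAction

variable {n : ℕ} (A : Matrix (Fin n) (Fin n) ℤ)

lemma pairing_eq_dotProduct_mulVec (y x : Fin n → ℤ) : pairing A y x = y ⬝ᵥ A *ᵥ x := by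
  simp [pairing, dotProduct, mulVec, Finset.mul_sum, mul_assoc]

lemma pairing_transpose (y x : Fin n → ℤ) : pairing Aᵀ x y = pairing A y x := by
  rw [pairing_eq_dotProduct_mulVec, pairing_eq_dotProduct_mulVec, dotProduct_mulVec,
    vecMul_transpose, dotProduct_comm]

lemma sCoroot_eq_sRoot_transpose : sCoroot A = sRoot Aᵀ := by
  funext k y i
  simp [sCoroot, sRoot, mul_comm]

lemma actCoroot_eq_actRoot_transpose : actCoroot A = actRoot Aᵀ := by
  funext w y
  simp [actCoroot, actRoot, sCoroot_eq_sRoot_transpose]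

lemma sRoot_eq_sub_single (k : Fin n) (x : Fin n → ℤ) :
    sRoot A k x = x - Pi.single k ((A *ᵥ x) k) := by
  funext i
  by_cases h : i = k
  · subst h; simp [sRoot, mulVec, dotProduct]
  · simp [sRoot, h]

lemma sCoroot_eq_sub_single (k : Fin n) (y : Fin n → ℤ) :
    sCoroot A k y = y - Pi.single k ((y ᵥ* A) k) := by
  rw [sCoroot_eq_sRoot_transpose, sRoot_eq_sub_single, mulVec_transpose]

lemma sRoot_apply_of_ne {k i : Fin n} (h : i ≠ k) (x : Fin n → ℤ) : sRoot A k x i = x i := by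
  simp [sRoot, h]

lemma sRoot_sRoot {k : Fin n} (hk : A k k = 2) (x : Fin n → ℤ) :
    sRoot A k (sRoot A k x) = x := by
  rw [sRoot_eq_sub_single A k (sRoot A k x), sRoot_eq_sub_single A k x, mulVec_sub, mulVec_single]
  have : (A *ᵥ x) k + ((A *ᵥ x) k - (A *ᵥ x) k * 2) = 0 := by ring
  simp [hk, sub_sub, ← Pi.single_add, this]

lemma pairing_sCoroot_sRoot {k : Fin n} (hk : A k k = 2) (y x : Fin n → ℤ) :
    pairing A (sCoroot A k y) (sRoot A k x) = pairing A y x := by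
  have hsingle : ∀ (v : Fin n → ℤ) c, v ⬝ᵥ A *ᵥ Pi.single k c = (v ᵥ* A) k * c := fun v c => by
    rw [dotProduct_mulVec, dotProduct_single]
  simp only [pairing_eq_dotProduct_mulVec, sRoot_eq_sub_single, sCoroot_eq_sub_single, mulVec_sub,
    dotProduct_sub, sub_dotProduct, single_dotProduct, hsingle, sub_vecMul, single_vecMul,
    Pi.sub_apply, Pi.smul_apply, row_apply, smul_eq_mul, hk]
  ring

lemma actRoot_cons (k : Fin n) (w : List (Fin n)) (x : Fin n → ℤ) :
    actRoot A (k :: w) x = sRoot A k (actRoot A w x) := rfl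

lemma actRoot_append (u w : List (Fin n)) (x : Fin n → ℤ) :
    actRoot A (u ++ w) x = actRoot A u (actRoot A w x) :=
  List.foldr_append

lemma actRoot_actRoot_reverse (hA : ∀ k, A k k = 2) (w : List (Fin n)) (x : Fin n → ℤ) :
    actRoot A w (actRoot A w.reverse x) = x := by
  induction w generalizing x with
  | nil => rfl
  | cons k w ih =>
    rw [List.reverse_cons, actRoot_append, actRoot_cons, ih]
    exact sRoot_sRoot A (hA k) x

lemma pairing_actCoroot_actRoot (hA : ∀ k, A k k = 2) (w : List (Fin n)) (y x : Fin n → ℤ) :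
    pairing A (actCoroot A w y) (actRoot A w x) = pairing A y x := by
  induction w with
  | nil => rfl
  | cons k w ih => exact (pairing_sCoroot_sRoot A (hA k) _ _).trans ih

lemma pairing_actCoroot_left (hA : ∀ k, A k k = 2) (w : List (Fin n)) (y x : Fin n → ℤ) :
    pairing A (actCoroot A w y) x = pairing A y (actRoot A w.reverse x) := by
  conv_lhs => rw [← actRoot_actRoot_reverse A hA w x]
  exact pairing_actCoroot_actRoot A hA w y _

lemma pairing_actCoroot_actRoot_transpose (u u' : List (Fin n)) (y x : Fin n → ℤ) :
    pairing A (actCoroot A u y) (actRoot A u' x) =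
      pairing Aᵀ (actCoroot Aᵀ u' x) (actRoot Aᵀ u y) := by
  rw [actCoroot_eq_actRoot_transpose, actCoroot_eq_actRoot_transpose, transpose_transpose,
    pairing_transpose]

lemma actRoot_apply_of_forall_mem {Y : Set (Fin n)} {w : List (Fin n)} (hw : ∀ k ∈ w, k ∈ Y)
    (x : Fin n → ℤ) {i : Fin n} (hi : i ∉ Y) : actRoot A w x i = x i := by
  induction w with
  | nil => rfl
  | cons k w ih =>
    rw [actRoot_cons, sRoot_apply_of_ne A (ne_of_mem_of_not_mem (hw k (.head w)) hi).symm]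
    exact ih fun k hk => hw k (.tail _ hk)

end WeylAction

section Reduction

variable {n : ℕ} (A : Matrix (Fin n) (Fin n) ℤ) {R : Type*} [CommRing R]

lemma intCast_comp_sRoot_congr {x x' : Fin n → ℤ} (h : (Int.cast ∘ x : Fin n → R) = Int.cast ∘ x')
    (k : Fin n) : (Int.cast ∘ sRoot A k x : Fin n → R) = Int.cast ∘ sRoot A k x' := by
  funext i
  have h' : ∀ j, (x j : R) = x' j := congrFun h
  simp [sRoot, apply_ite (Int.cast : ℤ → R), h']

lemma intCast_pairing_congr_right (y : Fin n → ℤ) {x x' : Fin n → ℤ}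
    (h : (Int.cast ∘ x : Fin n → R) = Int.cast ∘ x') :
    (pairing A y x : R) = pairing A y x' := by
  have h' : ∀ j, (x j : R) = x' j := congrFun h
  simp [pairing, h']

variable (Y : Set (Fin n))

lemma intCast_comp_sRoot_of_notMem {k : Fin n} (hk : ∀ j ∈ Y, (A k j : R) = 0)
    {x : Fin n → ℤ} (hx : ∀ j ∉ Y, (x j : R) = 0) :
    (Int.cast ∘ sRoot A k x : Fin n → R) = Int.cast ∘ x := by
  have hcoeff : ((∑ j, A k j * x j : ℤ) : R) = 0 := by
    push_cast
    refine Finset.sum_eq_zero fun j _ => ?_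
    by_cases hj : j ∈ Y
    · rw [hk j hj, zero_mul]
    · rw [hx j hj, mul_zero]
  funext i
  simp [sRoot, apply_ite (Int.cast : ℤ → R), hcoeff]

variable [DecidablePred (· ∈ Y)]

lemma intCast_comp_actRoot_filter (hY : ∀ i ∈ Y, ∀ j ∉ Y, (A j i : R) = 0) {x : Fin n → ℤ}
    (hx : ∀ i ∉ Y, (x i : R) = 0) (w : List (Fin n)) :
    (Int.cast ∘ actRoot A w x : Fin n → R) = Int.cast ∘ actRoot A (w.filter (· ∈ Y)) x := by
  induction w with
  | nil => rfl
  | cons k w ih =>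
    by_cases hk : k ∈ Y
    · rw [List.filter_cons_of_pos (by simpa using hk), actRoot_cons, actRoot_cons]
      exact intCast_comp_sRoot_congr A ih k
    · rw [List.filter_cons_of_neg (by simpa using hk), actRoot_cons, ← ih]
      refine intCast_comp_sRoot_of_notMem A Y (fun j hj => hY j hj k hk) fun i hi => ?_
      rw [show (actRoot A w x i : R) = _ from congrFun ih i,
        Function.comp_apply, actRoot_apply_of_forall_mem A (by simp) x hi, hx i hi]

lemma intCast_pairing_filter (hA : ∀ k, A k k = 2) (hY : ∀ i ∈ Y, ∀ j ∉ Y, (A j i : R) = 0)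
    (u w : List (Fin n)) (y : Fin n → ℤ) {x : Fin n → ℤ} (hx : ∀ i ∉ Y, (x i : R) = 0) :
    (pairing A (actCoroot A u y) (actRoot A w x) : R) =
      pairing A (actCoroot A (u.filter (· ∈ Y)) y) (actRoot A (w.filter (· ∈ Y)) x) := by
  rw [pairing_actCoroot_left A hA, pairing_actCoroot_left A hA, ← actRoot_append,
    ← actRoot_append, ← List.filter_reverse, ← List.filter_append]
  exact intCast_pairing_congr_right A y (intCast_comp_actRoot_filter A Y hY hx _)

lemma intCast_pairing_filter_of_transpose (hA : ∀ k, A k k = 2)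
    (hY : ∀ i ∈ Y, ∀ j ∉ Y, (A i j : R) = 0) (u w : List (Fin n)) {y : Fin n → ℤ}
    (hy : ∀ i ∉ Y, (y i : R) = 0) (x : Fin n → ℤ) :
    (pairing A (actCoroot A u y) (actRoot A w x) : R) =
      pairing A (actCoroot A (u.filter (· ∈ Y)) y) (actRoot A (w.filter (· ∈ Y)) x) := by
  rw [pairing_actCoroot_actRoot_transpose A u, pairing_actCoroot_actRoot_transpose A (u.filter _)]
  exact intCast_pairing_filter Aᵀ Y hA hY w u x hy

end Reduction

theorem pisystem_mod_d_general {n : ℕ} (A : Matrix (Fin n) (Fin n) ℤ) (hA : IsGCM A)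
    (Y : Set (Fin n)) (d : ℕ)
    (hdiv : (∀ i ∈ Y, ∀ j ∉ Y, (d : ℤ) ∣ A j i) ∨ (∀ i ∈ Y, ∀ j ∉ Y, (d : ℤ) ∣ A i j))
    (m : ℕ) (w : Fin m → List (Fin n)) (p : Fin m → Fin n) (hp : ∀ i, p i ∈ Y) :
    ∃ v : Fin m → List (Fin n), (∀ i, ∀ k ∈ v i, k ∈ Y) ∧
      ∀ i j,
        Int.ModEq (d : ℤ)
          (pairing A (actCoroot A (w i) (Pi.single (p i) 1))
            (actRoot A (w j) (Pi.single (p j) 1)))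
          (pairing A (actCoroot A (v i) (Pi.single (p i) 1))
            (actRoot A (v j) (Pi.single (p j) 1))) := by
  classical
  have hsingle : ∀ i, ∀ k ∉ Y, ((Pi.single (p i) 1 : Fin n → ℤ) k : ZMod d) = 0 := fun i k hk => by
    rw [Pi.single_eq_of_ne (ne_of_mem_of_not_mem (hp i) hk).symm, Int.cast_zero]
  have hzero {a : ℤ} : (d : ℤ) ∣ a → (a : ZMod d) = 0 := (ZMod.intCast_zmod_eq_zero_iff_dvd a d).2
  refine ⟨fun i => (w i).filter (· ∈ Y), fun i k hk => of_decide_eq_true (List.mem_filter.1 hk).2,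
    fun i j => ?_⟩
  rw [← ZMod.intCast_eq_intCast_iff]
  rcases hdiv with hdiv | hdiv
  · exact intCast_pairing_filter A Y hA.1 (fun i hi j hj => hzero (hdiv i hi j hj)) _ _ _
      (hsingle j)
  · exact intCast_pairing_filter_of_transpose A Y hA.1 (fun i hi j hj => hzero (hdiv i hi j hj))
      _ _ (hsingle i) _

/-- Let `A` be a symmetrizable GCM, `Y` a subset of the index set and
`d ≥ 2`, with either `d ∣ aⱼᵢ` or `d ∣ aᵢⱼ` for all `i ∈ Y`, `j ∉ Y`. Then for any family
of real roots `wᵢ·α_{pᵢ}` with `pᵢ ∈ Y`, there are Weyl words `vᵢ` with all letters in `Y`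
(so that `vᵢ·α_{pᵢ}` are real roots of `Y`) such that the matrices of coroot–root pairings
agree modulo `d`. -/
theorem pisystem_mod_d {n : ℕ} (A : Matrix (Fin n) (Fin n) ℤ) (hA : IsGCM A)
    (hsym : ∃ d : Fin n → ℚ, IsSymmetrizer A d)
    (Y : Set (Fin n)) (d : ℕ) (hd : 2 ≤ d)
    (hdiv : (∀ i ∈ Y, ∀ j ∉ Y, (d : ℤ) ∣ A j i) ∨ (∀ i ∈ Y, ∀ j ∉ Y, (d : ℤ) ∣ A i j))
    (m : ℕ) (w : Fin m → List (Fin n)) (p : Fin m → Fin n) (hp : ∀ i, p i ∈ Y) :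
    ∃ v : Fin m → List (Fin n), (∀ i, ∀ k ∈ v i, k ∈ Y) ∧
      ∀ i j,
        Int.ModEq (d : ℤ)
          (pairing A (actCoroot A (w i) (Pi.single (p i) 1))
            (actRoot A (w j) (Pi.single (p j) 1)))
          (pairing A (actCoroot A (v i) (Pi.single (p i) 1))
            (actRoot A (v j) (Pi.single (p j) 1))) :=
  pisystem_mod_d_general A hA Y d hdiv m w p hp
end
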